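/- arXiv:2508.18532 — 4 statements merged into one kernel-verified Lean document; each statement's English description precedes it below -/
import Mathlib

section
/- Suppose there exist real antisymmetric matrices M_A (2a×2a), M_B (2b×2b), Y, Z (antisymmetric), and a real matrix X (2a×2b) such that I + iM_A + (k₁−1)iZ ≥ 0, I + iM_A − iZ ≥ 0, I + iM_B − iY ≥ 0, and I + iM_B + (k₂−1)iY − k₁k₂ X^T (I + iM_A + (k₁−1)iZ)^{-1} X ≥ 0 (with the inverse existing). Then X^T X ≤ (4/(k₁k₂)) I. -/
/-!
Since `M_A` and `Z` are real antisymmetric, `Aᵀ = 2 - A`, so `Aᵀ` is positive definite too;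
likewise `H := 1 + iM_B + (k₂-1)iY` satisfies `H + Hᵀ = 2`. Adding the fourth condition
`H ≥ k₁k₂ XᵀA⁻¹X` to its transpose gives `2 ≥ k₁k₂ Xᵀ(A⁻¹ + Aᵀ⁻¹)X`, while
`A⁻¹ + A - 2 = (A⁻¹ - 1) A (A⁻¹ - 1) ≥ 0` and its analogue for `Aᵀ` give `A⁻¹ + Aᵀ⁻¹ ≥ 2`.
Hence `k₁k₂ XᵀX ≤ 1`, which is stronger than the claimed bound.
-/

open Matrix Complex
open scoped ComplexOrder

namespace Matrix

variable {m n : Type*}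

theorem inv_sub_one_mul_mul_inv_sub_one [Fintype n] [DecidableEq n] {𝕜 : Type*} [Field 𝕜]
    {A : Matrix n n 𝕜} (hA : IsUnit A) : (A⁻¹ - 1) * A * (A⁻¹ - 1) = A⁻¹ + A - 2 := by
  have h₁ : A⁻¹ * A = 1 := nonsing_inv_mul A ((isUnit_iff_isUnit_det A).mp hA)
  have h₂ : A * A⁻¹ = 1 := mul_nonsing_inv A ((isUnit_iff_isUnit_det A).mp hA)
  calc (A⁻¹ - 1) * A * (A⁻¹ - 1) = A⁻¹ * A * A⁻¹ - A⁻¹ * A - A * A⁻¹ + A := by noncomm_ring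
    _ = A⁻¹ + A - 2 := by rw [h₁, h₂, one_mul, ← one_add_one_eq_two]; abel

theorem PosDef.posSemidef_inv_add_sub_two [Fintype n] [DecidableEq n] {𝕜 : Type*} [RCLike 𝕜]
    {A : Matrix n n 𝕜} (hA : A.PosDef) : (A⁻¹ + A - 2).PosSemidef := by
  have h := hA.posSemidef.conjTranspose_mul_mul_same (A⁻¹ - 1)
  rwa [conjTranspose_sub, conjTranspose_one, hA.inv.isHermitian.eq,
    inv_sub_one_mul_mul_inv_sub_one hA.isUnit] at h

theorem PosDef.posSemidef_inv_add_inv_sub_two [Fintype n] [DecidableEq n] {𝕜 : Type*} [RCLike 𝕜]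
    {A B : Matrix n n 𝕜} (hA : A.PosDef) (hB : B.PosDef) (hAB : A + B = 2) :
    (A⁻¹ + B⁻¹ - 2).PosSemidef := by
  have hsum : A⁻¹ + B⁻¹ - 2 = (A⁻¹ + A - 2) + (B⁻¹ + B - 2) := by
    rw [← sub_eq_zero]
    calc _ = 2 - (A + B) := by noncomm_ring
      _ = 0 := by rw [hAB, sub_self]
  rw [hsum]
  exact hA.posSemidef_inv_add_sub_two.add hB.posSemidef_inv_add_sub_two

theorem transpose_map_ofReal_of_transpose_eq_neg {M : Matrix n n ℝ} (hM : Mᵀ = -M) :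
    (M.map ofReal)ᵀ = -M.map ofReal := by
  rw [← transpose_map, hM, Matrix.map_neg _ ofReal_neg]

theorem conjTranspose_map_ofReal (M : Matrix m n ℝ) : (M.map ofReal)ᴴ = (M.map ofReal)ᵀ := by
  rw [← conjTranspose_map _ fun _ => (conj_ofReal _).symm, conjTranspose_eq_transpose_of_trivial,
    transpose_map]

theorem add_transpose_eq_two_of_antisymm [DecidableEq n] {M N : Matrix n n ℝ} (hM : Mᵀ = -M)
    (hN : Nᵀ = -N) (c : ℂ) :
    (1 + I • M.map ofReal + c • (I • N.map ofReal)) +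
      (1 + I • M.map ofReal + c • (I • N.map ofReal))ᵀ = 2 := by
  simp only [transpose_add, transpose_smul, transpose_one,
    transpose_map_ofReal_of_transpose_eq_neg hM, transpose_map_ofReal_of_transpose_eq_neg hN]
  rw [smul_neg, smul_neg, smul_neg, ← one_add_one_eq_two]
  abel

theorem posSemidef_of_posSemidef_map_ofReal [Fintype n] {N : Matrix n n ℝ}
    (h : (N.map ofReal).PosSemidef) : N.PosSemidef := by
  refine posSemidef_iff_dotProduct_mulVec.mpr ⟨?_, fun x => ?_⟩
  · ext i j
    simpa using congr_fun₂ h.isHermitian i j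
  · have hx := h.dotProduct_mulVec_nonneg (fun i => (x i : ℂ))
    have : star (fun i => (x i : ℂ)) ⬝ᵥ (N.map ofReal *ᵥ fun i => (x i : ℂ)) =
        ((star x ⬝ᵥ (N *ᵥ x) : ℝ) : ℂ) := by
      simp [dotProduct, mulVec]
    rwa [this, zero_le_real] at hx

theorem posSemidef_one_sub_smul_transpose_mul_self [Fintype m] [Fintype n] [DecidableEq m]
    [DecidableEq n] {A : Matrix m m ℂ} {H : Matrix n n ℂ} {X : Matrix m n ℝ} {c : ℝ} (hc : 0 ≤ c)
    (hA : A.PosDef) (hAT : A + Aᵀ = 2) (hH : H + Hᵀ = 2)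
    (h : (H - (c : ℂ) • ((X.map ofReal)ᵀ * A⁻¹ * X.map ofReal)).PosSemidef) :
    (1 - c • (Xᵀ * X)).PosSemidef := by
  set X' := X.map ofReal
  have hT : (Hᵀ - (c : ℂ) • (X'ᵀ * Aᵀ⁻¹ * X')).PosSemidef := by
    simpa only [transpose_sub, transpose_smul, transpose_mul, transpose_transpose,
      transpose_nonsing_inv, Matrix.mul_assoc] using h.transpose
  have hconv : ((c : ℂ) • (X'ᵀ * (A⁻¹ + Aᵀ⁻¹ - 2) * X')).PosSemidef := by
    rw [← conjTranspose_map_ofReal]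
    exact ((hA.posSemidef_inv_add_inv_sub_two hA.transpose hAT).conjTranspose_mul_mul_same
      X').smul (by exact_mod_cast hc)
  have hsum : (H - (c : ℂ) • (X'ᵀ * A⁻¹ * X')) + (Hᵀ - (c : ℂ) • (X'ᵀ * Aᵀ⁻¹ * X')) +
      (c : ℂ) • (X'ᵀ * (A⁻¹ + Aᵀ⁻¹ - 2) * X') = (H + Hᵀ) - (2 * c : ℂ) • (X'ᵀ * X') := by
    simp only [Matrix.mul_sub, Matrix.mul_add, Matrix.sub_mul, Matrix.add_mul,
      ← one_add_one_eq_two, Matrix.mul_one]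
    module
  have hmap : (1 - c • (Xᵀ * X)).map ofReal = (2⁻¹ : ℝ) • (2 - (2 * c : ℂ) • (X'ᵀ * X')) := by
    ext i j
    simp only [X', map_apply, sub_apply, one_apply, ofNat_apply, smul_apply, mul_apply,
      transpose_apply, smul_eq_mul, real_smul, apply_ite ofReal, ofReal_sub, ofReal_one,
      ofReal_zero, ofReal_mul, ofReal_sum, ofReal_inv, ofReal_ofNat, Nat.cast_ite, Nat.cast_ofNat,
      CharP.cast_eq_zero]
    split_ifs <;> ring
  refine posSemidef_of_posSemidef_map_ofReal ?_
  rw [hmap, ← hH, ← hsum]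
  exact ((h.add hT).add hconv).smul (by norm_num)

end Matrix

theorem stmt7_general (a b : ℕ) (k₁ k₂ : ℝ) (hk₁ : 1 ≤ k₁) (hk₂ : 1 ≤ k₂)
    (MA Z : Matrix (Fin (2 * a)) (Fin (2 * a)) ℝ)
    (MB Y : Matrix (Fin (2 * b)) (Fin (2 * b)) ℝ)
    (X : Matrix (Fin (2 * a)) (Fin (2 * b)) ℝ)
    (hMA : MAᵀ = -MA) (hZ : Zᵀ = -Z) (hMB : MBᵀ = -MB) (hY : Yᵀ = -Y)
    (A : Matrix (Fin (2 * a)) (Fin (2 * a)) ℂ)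
    (hAdef : A = 1 + Complex.I • (MA.map Complex.ofReal) +
      ((k₁ : ℂ) - 1) • (Complex.I • (Z.map Complex.ofReal)))
    (hApd : A.PosDef)
    (hc4 : ((1 : Matrix (Fin (2 * b)) (Fin (2 * b)) ℂ) +
      Complex.I • (MB.map Complex.ofReal) +
      ((k₂ : ℂ) - 1) • (Complex.I • (Y.map Complex.ofReal)) -
      ((k₁ * k₂ : ℝ) : ℂ) •
        ((X.map Complex.ofReal)ᵀ * A⁻¹ * (X.map Complex.ofReal))).PosSemidef) :
    ((4 / (k₁ * k₂)) • (1 : Matrix (Fin (2 * b)) (Fin (2 * b)) ℝ) - Xᵀ * X).PosSemidef := by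
  have hc : 0 < k₁ * k₂ := mul_pos (by linarith) (by linarith)
  have hAT : A + Aᵀ = 2 := hAdef ▸ add_transpose_eq_two_of_antisymm hMA hZ _
  have hXX : (1 - (k₁ * k₂) • (Xᵀ * X)).PosSemidef :=
    posSemidef_one_sub_smul_transpose_mul_self hc.le hApd hAT
      (add_transpose_eq_two_of_antisymm hMB hY _) hc4
  have hsplit : (4 / (k₁ * k₂)) • (1 : Matrix (Fin (2 * b)) (Fin (2 * b)) ℝ) - Xᵀ * X =
      (k₁ * k₂)⁻¹ • (1 - (k₁ * k₂) • (Xᵀ * X)) + (3 / (k₁ * k₂)) • 1 := by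
    rw [smul_sub, smul_smul, inv_mul_cancel₀ hc.ne', one_smul]
    module
  rw [hsplit]
  exact (hXX.smul (inv_nonneg.mpr hc.le)).add (PosSemidef.one.smul (by positivity))

/-- If real antisymmetric `M_A, M_B, Y, Z` and a real `X` satisfy the four Schur-type
positivity conditions for `(k₁,k₂)`-extendibility, then `Xᵀ X ≤ (4/(k₁k₂)) I`. -/
theorem stmt7 (a b : ℕ) (k₁ k₂ : ℝ) (hk₁ : 1 ≤ k₁) (hk₂ : 1 ≤ k₂)
    (MA Z : Matrix (Fin (2 * a)) (Fin (2 * a)) ℝ)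
    (MB Y : Matrix (Fin (2 * b)) (Fin (2 * b)) ℝ)
    (X : Matrix (Fin (2 * a)) (Fin (2 * b)) ℝ)
    (hMA : MAᵀ = -MA) (hZ : Zᵀ = -Z) (hMB : MBᵀ = -MB) (hY : Yᵀ = -Y)
    (A : Matrix (Fin (2 * a)) (Fin (2 * a)) ℂ)
    (hAdef : A = 1 + Complex.I • (MA.map Complex.ofReal) +
      ((k₁ : ℂ) - 1) • (Complex.I • (Z.map Complex.ofReal)))
    (hApd : A.PosDef)
    (hc2 : ((1 : Matrix (Fin (2 * a)) (Fin (2 * a)) ℂ) +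
      Complex.I • (MA.map Complex.ofReal) -
      Complex.I • (Z.map Complex.ofReal)).PosSemidef)
    (hc3 : ((1 : Matrix (Fin (2 * b)) (Fin (2 * b)) ℂ) +
      Complex.I • (MB.map Complex.ofReal) -
      Complex.I • (Y.map Complex.ofReal)).PosSemidef)
    (hc4 : ((1 : Matrix (Fin (2 * b)) (Fin (2 * b)) ℂ) +
      Complex.I • (MB.map Complex.ofReal) +
      ((k₂ : ℂ) - 1) • (Complex.I • (Y.map Complex.ofReal)) -
      ((k₁ * k₂ : ℝ) : ℂ) •
        ((X.map Complex.ofReal)ᵀ * A⁻¹ * (X.map Complex.ofReal))).PosSemidef) :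
    ((4 / (k₁ * k₂)) • (1 : Matrix (Fin (2 * b)) (Fin (2 * b)) ℝ) - Xᵀ * X).PosSemidef :=
  stmt7_general a b k₁ k₂ hk₁ hk₂ MA Z MB Y X hMA hZ hMB hY A hAdef hApd hc4
end

section
/- Let M(k₁,k₂) be the 4×4 real antisymmetric matrix with M_{12} = (k₁−1)/k₁, M_{14} = M_{23} = 1/√(k₁k₂), M_{34} = (k₂−1)/k₂ (antisymmetric completion, other entries zero). Then the operator norm of the difference M(k₁,k₂) − D, minimized over all block-diagonal real antisymmetric matrices D = diag([[0,a],[−a,0]],[[0,b],[−b,0]]) with |a|,|b| ≤ 1, equals 1/√(k₁k₂). -/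
/-!
After subtracting the best block-diagonal matrix, with `a = (k₁ - 1)/k₁` and `b = (k₂ - 1)/k₂`,
what is left of `M` is `c` times a signed permutation matrix, `c = 1/√(k₁k₂)`, whose operator
norm is `c`. No choice of `a, b` does better, because the entry `M₄₁ = -c` is untouched by the
subtraction and the operator norm dominates the modulus of every entry.
-/

open Matrix

noncomputable def opNorm {n : Type*} [Fintype n] [DecidableEq n]
    (M : Matrix n n ℝ) : ℝ :=
  ‖Matrix.toEuclideanCLM (𝕜 := ℝ) M‖

open scoped Matrix.Norms.L2Operator

namespace Matrix

variable {𝕜 m n : Type*} [RCLike 𝕜] [Fintype m] [Fintype n] [DecidableEq n]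

lemma norm_entry_le_l2_opNorm (A : Matrix m n 𝕜) (i : m) (j : n) : ‖A i j‖ ≤ ‖A‖ := by
  have hcol := A.l2_opNorm_mulVec (EuclideanSpace.single j 1)
  rw [PiLp.norm_single, norm_one, mul_one] at hcol
  calc ‖A i j‖ = ‖(EuclideanSpace.equiv m 𝕜).symm (A *ᵥ EuclideanSpace.single j 1) i‖ := by simp
    _ ≤ _ := PiLp.norm_apply_le _ i
    _ ≤ ‖A‖ := hcol

lemma l2_opNorm_eq_of_conjTranspose_mul_self [Nonempty n] {A : Matrix m n 𝕜} {c : ℝ}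
    (hc : 0 ≤ c) (hA : Aᴴ * A = ((c ^ 2 : ℝ) : 𝕜) • 1) : ‖A‖ = c := by
  have hsq : ‖A‖ * ‖A‖ = c * c := by
    rw [← l2_opNorm_conjTranspose_mul_self, hA, norm_smul, norm_one, mul_one, RCLike.norm_ofReal,
      abs_of_nonneg (by positivity), sq]
  nlinarith [norm_nonneg A]

end Matrix

def antidiagSkew (c : ℝ) : Matrix (Fin 4) (Fin 4) ℝ :=
  !![0, 0, 0, c; 0, 0, c, 0; 0, -c, 0, 0; -c, 0, 0, 0]

lemma antidiagSkew_conjTranspose_mul_self (c : ℝ) :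
    (antidiagSkew c)ᴴ * antidiagSkew c = c ^ 2 • 1 := by
  ext i j
  fin_cases i <;> fin_cases j <;> simp [antidiagSkew, Matrix.mul_apply, Fin.sum_univ_four, sq]

lemma opNorm_antidiagSkew {c : ℝ} (hc : 0 ≤ c) : opNorm (antidiagSkew c) = c :=
  l2_opNorm_eq_of_conjTranspose_mul_self hc (antidiagSkew_conjTranspose_mul_self c)

lemma abs_sub_one_div_self_le_one (k : ℕ) : |((k : ℝ) - 1) / k| ≤ 1 := by
  rcases Nat.eq_zero_or_pos k with rfl | hk
  · simp -- `(0 - 1) / 0 = 0`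
  have hk' : (1 : ℝ) ≤ k := by exact_mod_cast hk
  rw [abs_div, Nat.abs_cast, div_le_one (by positivity), abs_of_nonneg (by linarith)]
  linarith

theorem stmt14_general (k₁ k₂ : ℕ)
    (M : Matrix (Fin 4) (Fin 4) ℝ)
    (hM : M = !![0, ((k₁ : ℝ) - 1) / k₁, 0, 1 / Real.sqrt (k₁ * k₂);
                 -(((k₁ : ℝ) - 1) / k₁), 0, 1 / Real.sqrt (k₁ * k₂), 0;
                 0, -(1 / Real.sqrt (k₁ * k₂)), 0, ((k₂ : ℝ) - 1) / k₂;
                 -(1 / Real.sqrt (k₁ * k₂)), 0, -(((k₂ : ℝ) - 1) / k₂), 0]) :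
    IsLeast {t : ℝ | ∃ a b : ℝ, |a| ≤ 1 ∧ |b| ≤ 1 ∧
        t = opNorm (M - !![0, a, 0, 0; -a, 0, 0, 0; 0, 0, 0, b; 0, 0, -b, 0])}
      (1 / Real.sqrt (k₁ * k₂)) := by
  set c := 1 / Real.sqrt (k₁ * k₂)
  have hc : 0 ≤ c := by positivity
  subst hM
  constructor
  · refine ⟨_, _, abs_sub_one_div_self_le_one k₁, abs_sub_one_div_self_le_one k₂, ?_⟩
    refine (opNorm_antidiagSkew hc).symm.trans (congrArg opNorm ?_)
    ext i j
    fin_cases i <;> fin_cases j <;> simp [antidiagSkew]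
  · rintro t ⟨a, b, -, -, rfl⟩
    calc c = ‖(_ : Matrix (Fin 4) (Fin 4) ℝ) 3 0‖ := by simp [abs_of_nonneg hc]
      _ ≤ _ := norm_entry_le_l2_opNorm _ 3 0

/-- For the `(k₁,k₂)`-extendible two-mode CM `M(k₁,k₂)`, the operator norm distance to
the set of block-diagonal antisymmetric CMs `diag([[0,a],[−a,0]],[[0,b],[−b,0]])`,
`|a|,|b| ≤ 1`, has least value `1/√(k₁k₂)`. -/
theorem stmt14 (k₁ k₂ : ℕ) (hk₁ : 1 ≤ k₁) (hk₂ : 1 ≤ k₂)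
    (M : Matrix (Fin 4) (Fin 4) ℝ)
    (hM : M = !![0, ((k₁ : ℝ) - 1) / k₁, 0, 1 / Real.sqrt (k₁ * k₂);
                 -(((k₁ : ℝ) - 1) / k₁), 0, 1 / Real.sqrt (k₁ * k₂), 0;
                 0, -(1 / Real.sqrt (k₁ * k₂)), 0, ((k₂ : ℝ) - 1) / k₂;
                 -(1 / Real.sqrt (k₁ * k₂)), 0, -(((k₂ : ℝ) - 1) / k₂), 0]) :
    IsLeast {t : ℝ | ∃ a b : ℝ, |a| ≤ 1 ∧ |b| ≤ 1 ∧
        t = opNorm (M - !![0, a, 0, 0; -a, 0, 0, 0; 0, 0, 0, b; 0, 0, -b, 0])}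
      (1 / Real.sqrt (k₁ * k₂)) :=
  stmt14_general k₁ k₂ M hM
end

section
/- Let M(k₁,k₂) be the 4×4 antisymmetric matrix of the previous statement. Then all eigenvalues of iM(k₁,k₂) lie in [−1, 1]; i.e., I + iM(k₁,k₂) ≥ 0 and I − iM(k₁,k₂) ≥ 0. -/
open Matrix
open scoped ComplexOrder

/-!
`I + iM` is a nonnegative combination of four rank-one matrices `v vᴴ`, with weights
`1 - 1/k₁`, `1 - 1/k₂`, `1`, `1`; and since `M` is antisymmetric, `I - iM` is the transpose
of `I + iM`.
-/

namespace Matrix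

variable {n R : Type*} [DecidableEq n] [CommRing R] [PartialOrder R] [StarRing R]

theorem PosSemidef.one_sub_of_transpose_eq_neg {B : Matrix n n R} (hB : Bᵀ = -B)
    (h : (1 + B).PosSemidef) : (1 - B).PosSemidef := by
  simpa [transpose_add, hB, sub_eq_add_neg] using h.transpose

end Matrix

/-- `twoModeCM (1 / √k₁) (1 / √k₂)` is the matrix `M(k₁, k₂)`. -/
def twoModeCM (s t : ℝ) : Matrix (Fin 4) (Fin 4) ℝ :=
  !![0, 1 - s ^ 2, 0, s * t;
     -(1 - s ^ 2), 0, s * t, 0;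
     0, -(s * t), 0, 1 - t ^ 2;
     -(s * t), 0, -(1 - t ^ 2), 0]

theorem twoModeCM_transpose (s t : ℝ) : (twoModeCM s t)ᵀ = -twoModeCM s t := by
  ext i j
  fin_cases i <;> fin_cases j <;> simp [twoModeCM]

section

open Complex

theorem one_add_I_smul_twoModeCM (s t : ℝ) :
    1 + I • (twoModeCM s t).map ofReal =
      (1 - s ^ 2) • vecMulVec ![1, -I, 0, 0] (star ![1, -I, 0, 0]) +
      (1 - t ^ 2) • vecMulVec ![0, 0, 1, -I] (star ![0, 0, 1, -I]) +
      vecMulVec ![(s : ℂ), 0, 0, -I * t] (star ![(s : ℂ), 0, 0, -I * t]) +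
      vecMulVec ![0, (s : ℂ), -I * t, 0] (star ![0, (s : ℂ), -I * t, 0]) := by
  ext i j
  fin_cases i <;> fin_cases j <;>
    simp [twoModeCM, vecMulVec, Complex.ext_iff, one_apply, sq, mul_comm]

variable {s t : ℝ}

theorem posSemidef_one_add_I_smul_twoModeCM (hs : s ^ 2 ≤ 1) (ht : t ^ 2 ≤ 1) :
    (1 + I • (twoModeCM s t).map ofReal).PosSemidef := by
  rw [one_add_I_smul_twoModeCM]
  refine (((PosSemidef.smul ?_ (sub_nonneg.2 hs)).add (PosSemidef.smul ?_ (sub_nonneg.2 ht))).add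
    ?_).add ?_ <;> exact posSemidef_vecMulVec_self_star _

theorem posSemidef_one_sub_I_smul_twoModeCM (hs : s ^ 2 ≤ 1) (ht : t ^ 2 ≤ 1) :
    (1 - I • (twoModeCM s t).map ofReal).PosSemidef := by
  refine (posSemidef_one_add_I_smul_twoModeCM hs ht).one_sub_of_transpose_eq_neg ?_
  rw [transpose_smul, ← transpose_map, twoModeCM_transpose, Matrix.map_neg _ ofReal_neg, smul_neg]

end

theorem sub_one_div_natCast_eq_one_sub_inv_sqrt_sq {k : ℕ} (hk : k ≠ 0) :
    ((k : ℝ) - 1) / k = 1 - (1 / Real.sqrt k) ^ 2 := by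
  rw [div_pow, one_pow, Real.sq_sqrt k.cast_nonneg]
  field_simp

theorem inv_sqrt_natCast_sq_le_one {k : ℕ} (hk : 1 ≤ k) : (1 / Real.sqrt k) ^ 2 ≤ 1 := by
  rw [div_pow, one_pow, Real.sq_sqrt k.cast_nonneg]
  exact div_le_one_of_le₀ (by exact_mod_cast hk) k.cast_nonneg

/-- The two-mode `(k₁,k₂)`-extendible CM `M(k₁,k₂)` satisfies the fermionic bona fide
condition: all eigenvalues of `iM(k₁,k₂)` lie in `[−1,1]`, i.e. `I + iM ⪰ 0` and
`I − iM ⪰ 0`. -/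
theorem stmt15 (k₁ k₂ : ℕ) (hk₁ : 1 ≤ k₁) (hk₂ : 1 ≤ k₂)
    (M : Matrix (Fin 4) (Fin 4) ℝ)
    (hM : M = !![0, ((k₁ : ℝ) - 1) / k₁, 0, 1 / Real.sqrt (k₁ * k₂);
                 -(((k₁ : ℝ) - 1) / k₁), 0, 1 / Real.sqrt (k₁ * k₂), 0;
                 0, -(1 / Real.sqrt (k₁ * k₂)), 0, ((k₂ : ℝ) - 1) / k₂;
                 -(1 / Real.sqrt (k₁ * k₂)), 0, -(((k₂ : ℝ) - 1) / k₂), 0]) :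
    ((1 : Matrix (Fin 4) (Fin 4) ℂ) + Complex.I • (M.map Complex.ofReal)).PosSemidef ∧
    ((1 : Matrix (Fin 4) (Fin 4) ℂ) - Complex.I • (M.map Complex.ofReal)).PosSemidef := by
  have hs := inv_sqrt_natCast_sq_le_one hk₁
  have ht := inv_sqrt_natCast_sq_le_one hk₂
  rw [hM, sub_one_div_natCast_eq_one_sub_inv_sqrt_sq (Nat.one_le_iff_ne_zero.mp hk₁),
    sub_one_div_natCast_eq_one_sub_inv_sqrt_sq (Nat.one_le_iff_ne_zero.mp hk₂),
    Real.sqrt_mul k₁.cast_nonneg, ← one_div_mul_one_div]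
  exact ⟨posSemidef_one_add_I_smul_twoModeCM hs ht, posSemidef_one_sub_I_smul_twoModeCM hs ht⟩
end

section
/- Let ε > 0, M_A = M_B = [[0,√(1−(ε/2)²)],[−√(1−(ε/2)²),0]] and X = (ε/2)I₂. Then for every real antisymmetric 2×2 matrix Y, the matrix N = [[M_A, √2 X],[−√2 X^T, M_B + Y]] fails N^T N ≤ I (column sums of squares exceed 1), so I + iN is not ≥ 0; hence no real antisymmetric Y exists for which the 4×4 bona fide condition I + iN ≥ 0 of the block matrix of Theorem 2 at level (1,2) holds. -/
open Matrix

/-- For the near-separable two-mode Gaussian state with `M_A = M_B` the antisymmetric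
matrix with off-diagonal entry `√(1−(ε/2)²)` and `X = (ε/2) I₂`, no real antisymmetric
`Y` makes the `(1,2)`-extension block matrix `N = [[M_A, √2 X],[−√2 Xᵀ, M_B + Y]]` a
valid CM: `Nᵀ N ≤ I` fails for every such `Y`. -/
theorem stmt16 (ε : ℝ) (hε : 0 < ε) (hε2 : ε ≤ 2)
    (MA MB : Matrix (Fin 2) (Fin 2) ℝ)
    (hMA : MA = !![0, Real.sqrt (1 - (ε / 2) ^ 2); -Real.sqrt (1 - (ε / 2) ^ 2), 0])
    (hMB : MB = MA)
    (X : Matrix (Fin 2) (Fin 2) ℝ) (hX : X = (ε / 2) • (1 : Matrix (Fin 2) (Fin 2) ℝ)) :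
    ¬ ∃ Y : Matrix (Fin 2) (Fin 2) ℝ, Yᵀ = -Y ∧
      ((1 : Matrix (Fin 2 ⊕ Fin 2) (Fin 2 ⊕ Fin 2) ℝ) -
        (Matrix.fromBlocks MA (Real.sqrt 2 • X)
            (-(Real.sqrt 2 • X)ᵀ) (MB + Y))ᵀ *
        (Matrix.fromBlocks MA (Real.sqrt 2 • X)
            (-(Real.sqrt 2 • X)ᵀ) (MB + Y))).PosSemidef := by
  rintro ⟨Y, hY, hPSD⟩
  have hd : 0 ≤ ((1 : Matrix (Fin 2 ⊕ Fin 2) (Fin 2 ⊕ Fin 2) ℝ) -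
        (Matrix.fromBlocks MA (Real.sqrt 2 • X)
            (-(Real.sqrt 2 • X)ᵀ) (MB + Y))ᵀ *
        (Matrix.fromBlocks MA (Real.sqrt 2 • X)
            (-(Real.sqrt 2 • X)ᵀ) (MB + Y))) (Sum.inl 0) (Sum.inl 0) := by
    exact hPSD.diag_nonneg
  have hs : Real.sqrt (1 - (ε / 2) ^ 2) ^ 2 = 1 - (ε / 2) ^ 2 :=
    Real.sq_sqrt (by nlinarith)
  have h2 : Real.sqrt 2 ^ 2 = 2 := Real.sq_sqrt (by norm_num)
  simp only [Matrix.sub_apply, Matrix.mul_apply, Fintype.sum_sum_type,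
    Fin.sum_univ_succ, Fin.sum_univ_zero, Matrix.fromBlocks_apply₁₁,
    Matrix.fromBlocks_apply₂₁, Matrix.transpose_apply, Matrix.one_apply,
    hMA, hMB, hX, Matrix.smul_apply, Matrix.neg_apply, Matrix.cons_val_zero,
    Matrix.cons_val_one, Matrix.head_cons, Matrix.one_apply_eq, smul_eq_mul] at hd
  norm_num at hd
  nlinarith [hd, hs, h2, Real.sqrt_nonneg 2, Real.sqrt_nonneg (1 - (ε/2)^2)]
end
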